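/- An allocation M is the outcome of some strict alternation policy if and only if M is Pareto optimal, M is balanced, M satisfies Condition 3, and the directed graph H_M contains no cycle. -/

import Mathlib

open Finset
open scoped Classical

/-- The most preferred item of a nonempty finset w.r.t. a linear order
(greater means more preferred). -/
noncomputable def favorite {ι : Type} (L : LinearOrder ι) (S : Finset ι) (h : S.Nonempty) : ι :=
  @Finset.max' ι L S h

/-- Sequential allocation: process the turns in order; at each turn the agent whose
turn it is picks her most preferred item among the items not yet allocated.
Returns the list of (agent, item) picks, in order. -/
noncomputable def seqAlloc {n : ℕ} {ι : Type} [DecidableEq ι]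
    (P : Fin n → LinearOrder ι) : List (Fin n) → Finset ι → List (Fin n × ι)
  | [], _ => []
  | a :: rest, S =>
    if h : S.Nonempty then
      (a, favorite (P a) S h) :: seqAlloc P rest (S.erase (favorite (P a) S h))
    else []

/-- `M` is the outcome of the policy `π`: every item is picked by the agent that
`M` assigns it to. -/
def IsOutcome {n : ℕ} {ι : Type} [Fintype ι] [DecidableEq ι]
    (P : Fin n → LinearOrder ι) (π : List (Fin n)) (M : ι → Fin n) : Prop :=
  ∀ o : ι, (M o, o) ∈ seqAlloc P π Finset.univ

/-- The set of items that agent `a` picks under the policy `π`. -/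
noncomputable def receives {n : ℕ} {ι : Type} [Fintype ι] [DecidableEq ι]
    (P : Fin n → LinearOrder ι) (π : List (Fin n)) (a : Fin n) : Finset ι :=
  Finset.univ.filter (fun o => (a, o) ∈ seqAlloc P π Finset.univ)

/-- An allocation `M` is Pareto optimal if there is no bijection `f` of the items such
that every agent weakly prefers `f o` to `o` for each item `o` she gets, with at least
one strict preference. -/
def ParetoOptimal {n : ℕ} {ι : Type} (P : Fin n → LinearOrder ι) (M : ι → Fin n) : Prop :=
  ¬ ∃ f : ι ≃ ι, (∀ o : ι, (P (M o)).le o (f o)) ∧ (∃ o : ι, (P (M o)).lt o (f o))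

/-- A policy is balanced if every agent has exactly `k` turns. -/
def BalancedPolicy {n : ℕ} (k : ℕ) (π : List (Fin n)) : Prop :=
  ∀ a : Fin n, π.count a = k

/-- An allocation is balanced if every agent receives exactly `k` items. -/
def BalancedAlloc {n : ℕ} {ι : Type} [Fintype ι] (k : ℕ) (M : ι → Fin n) : Prop :=
  ∀ a : Fin n, (Finset.univ.filter (fun o => M o = a)).card = k

/-- A policy is recursively balanced if it splits into `k` consecutive rounds of `n`
turns each, every agent having exactly one turn in each round. -/
def RecBalanced (n k : ℕ) (π : List (Fin n)) : Prop :=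
  ∃ rounds : List (List (Fin n)), rounds.length = k ∧
    (∀ r ∈ rounds, r.length = n ∧ ∀ a : Fin n, r.count a = 1) ∧
    π = rounds.flatten

/-- A strict alternation policy: every one of the `k` rounds uses the same order `σ`
over the agents. -/
def StrictAlt (n k : ℕ) (π : List (Fin n)) : Prop :=
  ∃ σ : List (Fin n), σ.length = n ∧ (∀ a : Fin n, σ.count a = 1) ∧
    π = (List.replicate k σ).flatten

/-- A balanced alternation policy: odd-numbered rounds use the order `σ` over the agents
and even-numbered rounds use its reverse. -/
def BalAlt (n k : ℕ) (π : List (Fin n)) : Prop :=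
  ∃ σ : List (Fin n), σ.length = n ∧ (∀ a : Fin n, σ.count a = 1) ∧
    π = ((List.range k).map (fun r => if r % 2 = 0 then σ else σ.reverse)).flatten

/-- `p j i` (for `1 ≤ i ≤ k`) is the item ranked `i`-th by agent `j` among the items `M`
allocates to `j`: it is allocated to `j`, and exactly `i - 1` of the items allocated
to `j` are strictly preferred to it by agent `j`. -/
def IsRankingOf {n : ℕ} {ι : Type} [Fintype ι] (P : Fin n → LinearOrder ι) (k : ℕ)
    (M : ι → Fin n) (p : Fin n → ℕ → ι) : Prop :=
  ∀ (j : Fin n) (i : ℕ), 1 ≤ i → i ≤ k →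
    M (p j i) = j ∧
    (Finset.univ.filter (fun o => M o = j ∧ (P j).lt (p j i) o)).card = i - 1

/-- Condition 3: for all `1 ≤ t < s ≤ k` and all agents `j, j'`, agent `j` strictly
prefers `p j t` to `p j' s`. -/
def Cond3 {n : ℕ} {ι : Type} (P : Fin n → LinearOrder ι) (k : ℕ) (p : Fin n → ℕ → ι) : Prop :=
  ∀ t s : ℕ, 1 ≤ t → t < s → s ≤ k → ∀ j j' : Fin n, (P j).lt (p j' s) (p j t)

/-- The edge relation of the directed graph `G_M`: for odd `i ≤ k` an edge `a → b`
whenever `b` strictly prefers `p a i` to `p b i`, and for even `i ≤ k` an edge `a → b`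
whenever `a` strictly prefers `p b i` to `p a i`. -/
def GM {n : ℕ} {ι : Type} (P : Fin n → LinearOrder ι) (k : ℕ) (p : Fin n → ℕ → ι)
    (a b : Fin n) : Prop :=
  (∃ i : ℕ, 1 ≤ i ∧ i ≤ k ∧ i % 2 = 1 ∧ (P b).lt (p b i) (p a i)) ∨
  (∃ i : ℕ, 1 ≤ i ∧ i ≤ k ∧ i % 2 = 0 ∧ (P a).lt (p a i) (p b i))

/-- The edge relation of the directed graph `H_M`: for each `i ≤ k` an edge `a → b`
whenever `b` strictly prefers `p a i` to `p b i`. -/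
def HM {n : ℕ} {ι : Type} (P : Fin n → LinearOrder ι) (k : ℕ) (p : Fin n → ℕ → ι)
    (a b : Fin n) : Prop :=
  ∃ i : ℕ, 1 ≤ i ∧ i ≤ k ∧ (P b).lt (p b i) (p a i)

/-- The `k` most preferred items of agent `j`: those items with fewer than `k` items
strictly preferred to them by `j`. -/
noncomputable def topItems {n : ℕ} {ι : Type} [Fintype ι] (P : Fin n → LinearOrder ι)
    (k : ℕ) (j : Fin n) : Finset ι :=
  Finset.univ.filter (fun o => (Finset.univ.filter (fun o' => (P j).lt o o')).card < k)

/-- The rank of item `o` in agent `j`'s preference (the most preferred item has rank 1). -/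
noncomputable def rankOf {n : ℕ} {ι : Type} [Fintype ι] (P : Fin n → LinearOrder ι)
    (j : Fin n) (o : ι) : ℕ :=
  (Finset.univ.filter (fun o' => (P j).lt o o')).card + 1

/-!
Sequential allocation produces exactly the greedy pick lists: lists of (agent, item) pairs in
which every agent strictly prefers her item to all items picked after it. Under strict
alternation in the order `σ`, write `q j i` for the item agent `j` takes in round `i`. Greediness
across rounds is Condition 3 for `q`; in particular each `q j` lists `j`'s bundle from best to
worst, so `q` is the ranking `p`. Greediness within a round says that no edge of `H_M` points
backwards along `σ`, i.e. `σ` is a topological order of `H_M`. So an outcome of strict alternation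
satisfies Condition 3 and has acyclic `H_M`; conversely, a topological order of the acyclic
`H_M` together with the ranking gives greedy rounds. A greedy outcome is Pareto optimal because
an improvement has to fix the first pick, then the next one, and so on.
-/

open Relation

section Greedy

variable {n : ℕ} {ι : Type}

theorem favorite_mem (L : LinearOrder ι) (S : Finset ι) (h : S.Nonempty) :
    favorite L S h ∈ S :=
  @Finset.max'_mem ι L S h

theorem lt_favorite (L : LinearOrder ι) {S : Finset ι} (h : S.Nonempty) {x : ι} (hx : x ∈ S)
    (hne : x ≠ favorite L S h) : L.lt x (favorite L S h) := by
  let := L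
  exact lt_of_le_of_ne (S.le_max' x hx) hne

theorem favorite_eq (L : LinearOrder ι) {S : Finset ι} (h : S.Nonempty) {o : ι} (ho : o ∈ S)
    (hmax : ∀ x ∈ S, x ≠ o → L.lt x o) : favorite L S h = o := by
  let := L
  refine le_antisymm (S.max'_le h _ fun x hx => ?_) (S.le_max' o ho)
  rcases eq_or_ne x o with rfl | hne
  exacts [le_rfl, (hmax x hx hne).le]

def IsGreedy (P : Fin n → LinearOrder ι) (L : List (Fin n × ι)) : Prop :=
  L.Pairwise fun x y => (P x.1).lt y.2 x.2

variable {P : Fin n → LinearOrder ι}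

theorem IsGreedy.nodup_snd {L : List (Fin n × ι)} (h : IsGreedy P L) :
    (L.map Prod.snd).Nodup :=
  List.pairwise_map.mpr <| h.imp fun {x _} hxy => by let := P x.1; exact hxy.ne'

theorem IsGreedy.fst_eq {L : List (Fin n × ι)} {M : ι → Fin n} (h : IsGreedy P L)
    (hcov : ∀ o, (M o, o) ∈ L) {x : Fin n × ι} (hx : x ∈ L) : x.1 = M x.2 :=
  congrArg Prod.fst (List.inj_on_of_nodup_map h.nodup_snd hx (hcov x.2) rfl)

/-- The head pick cannot move: every other pick is worse for its picker. -/
theorem IsGreedy.apply_snd_eq {f : ι → ι} (hf : f.Injective) :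
    ∀ {L : List (Fin n × ι)}, IsGreedy P L →
      (∀ x ∈ L, f x.2 ∈ L.map Prod.snd ∧ (P x.1).le x.2 (f x.2)) → ∀ x ∈ L, f x.2 = x.2
  | [], _, _ => by simp
  | (a, o) :: L, h, himp => by
    obtain ⟨hhead, htail⟩ := List.pairwise_cons.mp h
    have hfo : f o = o := by
      obtain ⟨hmem, hle⟩ := himp (a, o) List.mem_cons_self
      rcases List.mem_cons.mp hmem with hfo | hmem
      · exact hfo
      · obtain ⟨y, hy, hyo⟩ := List.mem_map.mp hmem
        let := P a
        exact absurd hle (not_le.mpr (hyo ▸ hhead y hy))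
    have himp' : ∀ x ∈ L, f x.2 ∈ L.map Prod.snd ∧ (P x.1).le x.2 (f x.2) := by
      intro x hx
      obtain ⟨hmem, hle⟩ := himp x (List.mem_cons_of_mem _ hx)
      refine ⟨(List.mem_cons.mp hmem).resolve_left fun hxo => ?_, hle⟩
      let := P a
      exact (hhead x hx).ne (hf (hxo.trans hfo.symm))
    rintro x (_ | ⟨_, hx⟩)
    exacts [hfo, apply_snd_eq hf htail himp' x hx]

theorem IsGreedy.paretoOptimal {L : List (Fin n × ι)} {M : ι → Fin n}
    (h : IsGreedy P L) (hcov : ∀ o, (M o, o) ∈ L) : ParetoOptimal P M := by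
  rintro ⟨f, hle, o, hlt⟩
  have hfix := h.apply_snd_eq f.injective (fun x hx => ⟨List.mem_map.mpr ⟨_, hcov _, rfl⟩,
    h.fst_eq hcov hx ▸ hle x.2⟩) _ (hcov o)
  let := P (M o)
  exact hlt.ne' hfix

variable [DecidableEq ι]

theorem snd_mem_of_mem_seqAlloc :
    ∀ {π : List (Fin n)} {S : Finset ι} {x : Fin n × ι}, x ∈ seqAlloc P π S → x.2 ∈ S
  | [], _, _, h => by simp [seqAlloc] at h
  | a :: π, S, x, h => by
    rw [seqAlloc] at h
    split_ifs at h with hS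
    · rcases List.mem_cons.mp h with rfl | h
      · exact favorite_mem _ _ hS
      · exact Finset.mem_of_mem_erase (snd_mem_of_mem_seqAlloc h)
    · simp at h

theorem isGreedy_seqAlloc : ∀ (π : List (Fin n)) (S : Finset ι), IsGreedy P (seqAlloc P π S)
  | [], _ => List.Pairwise.nil
  | a :: π, S => by
    rw [seqAlloc]
    split_ifs with hS
    · refine List.pairwise_cons.mpr ⟨fun y hy => ?_, isGreedy_seqAlloc π _⟩
      have hy := snd_mem_of_mem_seqAlloc hy
      exact lt_favorite _ hS (Finset.mem_of_mem_erase hy) (Finset.ne_of_mem_erase hy)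
    · exact List.Pairwise.nil

theorem map_fst_seqAlloc :
    ∀ (π : List (Fin n)) (S : Finset ι), π.length ≤ S.card → (seqAlloc P π S).map Prod.fst = π
  | [], _, _ => by simp [seqAlloc]
  | a :: π, S, hlen => by
    rw [List.length_cons] at hlen
    have hS : S.Nonempty := Finset.card_pos.mp (by omega)
    rw [seqAlloc, dif_pos hS, List.map_cons, map_fst_seqAlloc π]
    rw [Finset.card_erase_of_mem (favorite_mem _ _ _)]
    omega

theorem seqAlloc_map_fst_of_isGreedy :
    ∀ (L : List (Fin n × ι)) (S : Finset ι), IsGreedy P L → (L.map Prod.snd).toFinset = S →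
      seqAlloc P (L.map Prod.fst) S = L
  | [], _, _, _ => by simp [seqAlloc]
  | (a, o) :: L, S, h, hS => by
    obtain ⟨hhead, htail⟩ := List.pairwise_cons.mp h
    have hoL : o ∉ L.map Prod.snd := fun ho => by
      obtain ⟨y, hy, rfl⟩ := List.mem_map.mp ho
      let := P a
      exact (hhead y hy).false
    have hoS : o ∈ S := by simp [← hS]
    have hfav : favorite (P a) S ⟨o, hoS⟩ = o := by
      refine favorite_eq _ _ hoS fun x hx hne => ?_
      simp only [← hS, List.map_cons, List.toFinset_cons, Finset.mem_insert, hne,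
        List.mem_toFinset, false_or, List.mem_map] at hx
      obtain ⟨y, hy, rfl⟩ := hx
      exact hhead y hy
    have herase : S.erase o = (L.map Prod.snd).toFinset := by
      rw [← hS, List.map_cons, List.toFinset_cons, Finset.erase_insert (by simpa using hoL)]
    rw [List.map_cons, seqAlloc, dif_pos ⟨o, hoS⟩, hfav, herase,
      seqAlloc_map_fst_of_isGreedy L _ htail rfl]

theorem isOutcome_iff [Fintype ι] {π : List (Fin n)} {M : ι → Fin n}
    (hπ : π.length ≤ Fintype.card ι) :
    IsOutcome P π M ↔ ∃ L : List (Fin n × ι), L.map Prod.fst = π ∧ IsGreedy P L ∧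
      ∀ o, (M o, o) ∈ L := by
  constructor
  · exact fun hout => ⟨_, map_fst_seqAlloc π _ hπ, isGreedy_seqAlloc π _, hout⟩
  · rintro ⟨L, rfl, hL, hcov⟩ o
    rw [seqAlloc_map_fst_of_isGreedy L _ hL (Finset.eq_univ_of_forall fun o =>
      List.mem_toFinset.mpr (List.mem_map.mpr ⟨_, hcov o, rfl⟩))]
    exact hcov o

end Greedy

theorem List.pairwise_range'_iff {R : ℕ → ℕ → Prop} {s n : ℕ} :
    (List.range' s n).Pairwise R ↔ ∀ a b, s ≤ a → a < b → b < s + n → R a b := by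
  rw [List.pairwise_iff_getElem]
  simp only [List.length_range', List.getElem_range', Nat.one_mul]
  constructor
  · intro h a b hsa hab hb
    simpa [Nat.add_sub_cancel' hsa, Nat.add_sub_cancel' (hsa.trans hab.le)] using
      h (a - s) (b - s) (by omega) (by omega) (by omega)
  · exact fun h i j hi hj hij => h _ _ (by omega) (by omega) (by omega)

theorem List.exists_eq_map_pair {α β : Type*} [Inhabited β] :
    ∀ {σ : List α}, σ.Nodup → ∀ {L : List (α × β)}, L.map Prod.fst = σ →
      ∃ g : α → β, L = σ.map fun a => (a, g a)
  | [], _, L, hL => ⟨fun _ => default, by simpa using hL⟩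
  | a :: σ, hσ, L, hL => by
    obtain ⟨⟨c, b⟩, L', rfl, rfl, hL'⟩ := List.map_eq_cons_iff.mp hL
    obtain ⟨haσ, hσ⟩ := List.nodup_cons.mp hσ
    obtain ⟨g, rfl⟩ := List.exists_eq_map_pair hσ hL'
    refine ⟨Function.update g c b, ?_⟩
    simp only [List.map_cons, Function.update_self, List.cons.injEq, List.map_inj_left, true_and]
    intro x hx
    rw [Function.update_of_ne (ne_of_mem_of_not_mem hx haσ)]

section Rounds

variable {n : ℕ} {ι : Type} {P : Fin n → LinearOrder ι}

def roundPicks (σ : List (Fin n)) (k : ℕ) (q : Fin n → ℕ → ι) : List (Fin n × ι) :=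
  ((List.range' 1 k).map fun i => σ.map fun j => (j, q j i)).flatten

theorem map_fst_roundPicks (σ : List (Fin n)) (k : ℕ) (q : Fin n → ℕ → ι) :
    (roundPicks σ k q).map Prod.fst = (List.replicate k σ).flatten := by
  simp [roundPicks, List.map_flatten, Function.comp_def, List.map_const']

theorem mem_roundPicks {σ : List (Fin n)} {k : ℕ} {q : Fin n → ℕ → ι} {x : Fin n × ι} :
    x ∈ roundPicks σ k q ↔ ∃ i, (1 ≤ i ∧ i ≤ k) ∧ ∃ j ∈ σ, (j, q j i) = x := by
  simp only [roundPicks, List.mem_flatten, List.mem_map, List.mem_range']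
  constructor
  · rintro ⟨_, ⟨_, ⟨m, hm, rfl⟩, rfl⟩, hx⟩
    exact ⟨1 + 1 * m, ⟨by omega, by omega⟩, List.mem_map.mp hx⟩
  · rintro ⟨i, hi, hx⟩
    exact ⟨_, ⟨i, ⟨i - 1, by omega, by omega⟩, rfl⟩, List.mem_map.mpr hx⟩

theorem exists_roundPicks [Inhabited ι] {σ : List (Fin n)} (hσ : σ.Nodup) :
    ∀ {k : ℕ} {L : List (Fin n × ι)}, L.map Prod.fst = (List.replicate k σ).flatten →
      ∃ q, L = roundPicks σ k q
  | 0, L, hL => ⟨fun _ _ => default, by simpa [roundPicks] using hL⟩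
  | k + 1, L, hL => by
    rw [List.replicate_succ', List.flatten_append, List.flatten_singleton,
      List.map_eq_append_iff] at hL
    obtain ⟨L₁, L₂, rfl, hL₁, hL₂⟩ := hL
    obtain ⟨q, rfl⟩ := exists_roundPicks hσ hL₁
    obtain ⟨g, rfl⟩ := List.exists_eq_map_pair hσ hL₂
    refine ⟨fun j i => if i = k + 1 then g j else q j i, ?_⟩
    simp only [roundPicks, List.range'_concat, List.map_append, List.flatten_append,
      List.map_singleton, List.flatten_singleton]
    congr 1
    · refine congrArg List.flatten (List.map_congr_left fun i hi => ?_)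
      obtain ⟨m, hm, rfl⟩ := List.mem_range'.mp hi
      simp only [if_neg (show 1 + 1 * m ≠ k + 1 by omega)]
    · simp [Nat.add_comm]

theorem isGreedy_roundPicks_iff {σ : List (Fin n)} {k : ℕ} {q : Fin n → ℕ → ι}
    (hσ : ∀ a, a ∈ σ) :
    IsGreedy P (roundPicks σ k q) ↔
      (∀ i, 1 ≤ i → i ≤ k → σ.Pairwise fun a b => (P a).lt (q b i) (q a i)) ∧ Cond3 P k q := by
  simp only [IsGreedy, roundPicks, List.pairwise_flatten, List.forall_mem_map, List.pairwise_map,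
    List.pairwise_range'_iff, List.mem_range', Cond3]
  refine and_congr ⟨fun h i h1 h2 => h i ⟨i - 1, by omega, by omega⟩, ?_⟩
    ⟨fun h t s h1 h2 h3 a b => h t s h1 h2 (by omega) a (hσ a) b (hσ b),
      fun h t s h1 h2 h3 a _ b _ => h t s h1 h2 (by omega) a b⟩
  rintro h i ⟨m, hm, rfl⟩
  exact h _ (by omega) (by omega)

end Rounds

section StrictAlternation

variable {n k : ℕ}

theorem length_of_strictAlt {π : List (Fin n)} (h : StrictAlt n k π) : π.length = k * n := by
  obtain ⟨σ, hσ, -, rfl⟩ := h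
  simp [hσ]

theorem strictAlt_iff {π : List (Fin n)} :
    StrictAlt n k π ↔ ∃ σ : List (Fin n), σ.Nodup ∧ (∀ a, a ∈ σ) ∧
      π = (List.replicate k σ).flatten := by
  constructor
  · rintro ⟨σ, -, hcount, rfl⟩
    exact ⟨σ, List.nodup_iff_count_le_one.mpr fun a => (hcount a).le,
      fun a => List.count_pos_iff.mp (by rw [hcount a]; exact Nat.one_pos), rfl⟩
  · rintro ⟨σ, hnd, hmem, rfl⟩
    have huniv : σ.toFinset = univ := eq_univ_of_forall fun a => List.mem_toFinset.mpr (hmem a)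
    refine ⟨σ, ?_, fun a => List.count_eq_one_of_mem hnd (hmem a), rfl⟩
    rw [← List.toFinset_card_of_nodup hnd, huniv, card_univ, Fintype.card_fin]

theorem strictAlt_outcome_iff {ι : Type} [Fintype ι] [DecidableEq ι] [Inhabited ι]
    (hcard : Fintype.card ι = k * n) {P : Fin n → LinearOrder ι} {M : ι → Fin n} :
    (∃ π, StrictAlt n k π ∧ IsOutcome P π M) ↔
      ∃ σ q, σ.Nodup ∧ (∀ a, a ∈ σ) ∧ IsGreedy P (roundPicks σ k q) ∧
        ∀ o, (M o, o) ∈ roundPicks σ k q := by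
  constructor
  · rintro ⟨π, hπ, hout⟩
    obtain ⟨L, hL, hgreedy, hcov⟩ :=
      (isOutcome_iff ((length_of_strictAlt hπ).trans hcard.symm).le).mp hout
    obtain ⟨σ, hnd, hmem, rfl⟩ := strictAlt_iff.mp hπ
    obtain ⟨q, rfl⟩ := exists_roundPicks hnd hL
    exact ⟨σ, q, hnd, hmem, hgreedy, hcov⟩
  · rintro ⟨σ, q, hnd, hmem, hgreedy, hcov⟩
    have hπ : StrictAlt n k _ := strictAlt_iff.mpr ⟨σ, hnd, hmem, rfl⟩
    exact ⟨_, hπ, (isOutcome_iff ((length_of_strictAlt hπ).trans hcard.symm).le).mpr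
      ⟨_, map_fst_roundPicks σ k q, hgreedy, hcov⟩⟩

end StrictAlternation

theorem Finset.eq_of_card_filter_lt_eq {α : Type*} [LinearOrder α] {s : Finset α} {x y : α}
    (hx : x ∈ s) (hy : y ∈ s) (h : #{z ∈ s | x < z} = #{z ∈ s | y < z}) : x = y := by
  by_contra hne
  wlog hxy : x < y generalizing x y
  · exact this hy hx h.symm (Ne.symm hne) (lt_of_le_of_ne (not_lt.mp hxy) (Ne.symm hne))
  have hss : {z ∈ s | y < z} ⊂ {z ∈ s | x < z} :=
    (ssubset_iff_of_subset fun z hz => by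
      simp only [mem_filter] at hz ⊢
      exact ⟨hz.1, hxy.trans hz.2⟩).mpr ⟨y, by simp [hy, hxy], by simp⟩
  exact (card_lt_card hss).ne' h

theorem injOn_Icc_of_strictAnti {ι : Type} (L : LinearOrder ι) {f : ℕ → ι} {k : ℕ}
    (hf : ∀ t s, 1 ≤ t → t < s → s ≤ k → L.lt (f s) (f t)) : Set.InjOn f (Icc 1 k : Finset ℕ) := by
  let := L
  refine StrictAntiOn.injOn fun t ht s hs hts => ?_
  simp only [coe_Icc, Set.mem_Icc] at ht hs
  exact hf t s ht.1 hts hs.2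

section Ranking

variable {n k : ℕ} {ι : Type} [Fintype ι] {P : Fin n → LinearOrder ι} {M : ι → Fin n}

theorem IsRankingOf.eq {p q : Fin n → ℕ → ι} (hp : IsRankingOf P k M p)
    (hq : IsRankingOf P k M q) {j : Fin n} {i : ℕ} (h1 : 1 ≤ i) (h2 : i ≤ k) :
    p j i = q j i := by
  let := P j
  obtain ⟨hpj, hpcard⟩ := hp j i h1 h2
  obtain ⟨hqj, hqcard⟩ := hq j i h1 h2
  refine eq_of_card_filter_lt_eq (s := {o | M o = j}) (by simpa using hpj) (by simpa using hqj) ?_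
  simp only [filter_filter]
  exact hpcard.trans hqcard.symm

theorem isRankingOf_of_strictAnti {q : Fin n → ℕ → ι}
    (hanti : ∀ j t s, 1 ≤ t → t < s → s ≤ k → (P j).lt (q j s) (q j t))
    (hbundle : ∀ j o, M o = j ↔ ∃ i, (1 ≤ i ∧ i ≤ k) ∧ q j i = o) :
    IsRankingOf P k M q := by
  intro j i h1 h2
  have hmem : ∀ {o}, o ∈ (Icc 1 k).image (q j) ↔ M o = j := by
    simp [hbundle j]
  refine ⟨hmem.mp (mem_image_of_mem _ (mem_Icc.mpr ⟨h1, h2⟩)), ?_⟩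
  have hbetter : (univ.filter fun o => M o = j ∧ (P j).lt (q j i) o) = (Ico 1 i).image (q j) := by
    ext o
    simp only [mem_filter, mem_univ, true_and, mem_image, mem_Ico]
    constructor
    · rintro ⟨hMo, hlt⟩
      obtain ⟨t, ht, rfl⟩ := mem_image.mp (hmem.mpr hMo)
      obtain ⟨ht1, htk⟩ := mem_Icc.mp ht
      refine ⟨t, ⟨ht1, lt_of_not_ge fun hit => ?_⟩, rfl⟩
      let := P j
      rcases hit.lt_or_eq with hit | rfl
      exacts [(hanti j i t h1 hit htk).asymm hlt, hlt.false]
    · rintro ⟨t, ⟨ht1, hti⟩, rfl⟩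
      exact ⟨hmem.mp (mem_image_of_mem _ (mem_Icc.mpr ⟨ht1, by omega⟩)), hanti j t i ht1 hti h2⟩
  rw [hbetter, card_image_of_injOn ((injOn_Icc_of_strictAnti _ (hanti j)).mono ?_), Nat.card_Ico]
  intro t ht
  simp only [coe_Ico, coe_Icc, Set.mem_Ico, Set.mem_Icc] at ht ⊢
  omega

theorem balancedAlloc_of_strictAnti {q : Fin n → ℕ → ι}
    (hanti : ∀ j t s, 1 ≤ t → t < s → s ≤ k → (P j).lt (q j s) (q j t))
    (hbundle : ∀ j o, M o = j ↔ ∃ i, (1 ≤ i ∧ i ≤ k) ∧ q j i = o) :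
    BalancedAlloc k M := by
  intro j
  have himage : (Icc 1 k).image (q j) = univ.filter fun o => M o = j := by
    ext o
    simp [hbundle j]
  rw [← himage, card_image_of_injOn (injOn_Icc_of_strictAnti _ (hanti j)), Nat.card_Icc]
  omega

end Ranking

theorem exists_strictAnti_enum {ι : Type} [Inhabited ι] (L : LinearOrder ι) (s : Finset ι)
    {k : ℕ} (hs : s.card = k) :
    ∃ f : ℕ → ι, (∀ t u, 1 ≤ t → t < u → u ≤ k → L.lt (f u) (f t)) ∧
      ∀ o, o ∈ s ↔ ∃ i, (1 ≤ i ∧ i ≤ k) ∧ f i = o := by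
  set l := s.sort (· ≥ ·)
  have hl : l.Pairwise (· > ·) :=
    ((s.pairwise_sort _).and (s.sort_nodup _)).imp fun h => lt_of_le_of_ne h.1 (Ne.symm h.2)
  have hlen : l.length = k := (length_sort _).trans hs
  have hanti : ∀ t u, 1 ≤ t → t < u → u ≤ k → l.getD (u - 1) default < l.getD (t - 1) default :=
    fun t u h1 h2 h3 => by
      rw [List.getD_eq_getElem _ _ (by omega), List.getD_eq_getElem _ _ (by omega)]
      exact List.pairwise_iff_getElem.mp hl _ _ _ _ (by omega)
  have himage : (Icc 1 k).image (fun i => l.getD (i - 1) default) = s := by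
    refine eq_of_subset_of_card_le (fun o ho => ?_) ?_
    · obtain ⟨i, hi, rfl⟩ := mem_image.mp ho
      rw [List.getD_eq_getElem _ _ (by simp only [mem_Icc] at hi; omega)]
      exact (mem_sort _).mp (List.getElem_mem _)
    · rw [hs, card_image_of_injOn (injOn_Icc_of_strictAnti L hanti), Nat.card_Icc]
      omega
  refine ⟨fun i => l.getD (i - 1) default, hanti, fun o => ?_⟩
  rw [← himage]
  simp

section TopologicalOrder

variable {α : Type*} {R : α → α → Prop}

theorem Relation.not_transGen_self_of_pairwise {l : List α} (hmem : ∀ a, a ∈ l)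
    (hirr : ∀ a, ¬ R a a) (hl : l.Pairwise fun a b => ¬ R b a) (a : α) :
    ¬ TransGen R a a := by
  have hidx : ∀ a b, R a b → l.idxOf a < l.idxOf b := by
    intro a b hab
    have ha := List.idxOf_lt_length_iff.mpr (hmem a)
    have hb := List.idxOf_lt_length_iff.mpr (hmem b)
    rcases lt_trichotomy (l.idxOf a) (l.idxOf b) with hlt | heq | hgt
    · exact hlt
    · rw [List.idxOf_inj (hmem a)] at heq
      exact absurd (heq ▸ hab) (hirr b)
    · have := List.pairwise_iff_getElem.mp hl _ _ hb ha hgt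
      rw [List.getElem_idxOf, List.getElem_idxOf] at this
      exact absurd hab this
  intro h
  have := TransGen.lift (l.idxOf ·) hidx a a h
  rw [transGen_eq_self] at this
  exact lt_irrefl _ this

theorem Relation.exists_pairwise_of_acyclic [Fintype α] (h : ∀ a, ¬ TransGen R a a) :
    ∃ l : List α, l.Nodup ∧ (∀ a, a ∈ l) ∧ l.Pairwise fun a b => ¬ R b a := by
  set depth : α → ℕ := fun a => #{b | TransGen R b a}
  have hdepth : ∀ a b, R a b → depth a < depth b := by
    intro a b hab
    refine card_lt_card ((ssubset_iff_of_subset fun c hc => ?_).mpr ⟨a, ?_, ?_⟩)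
    · simp only [mem_filter, mem_univ, true_and] at hc ⊢
      exact hc.tail hab
    · simpa using TransGen.single hab
    · simpa using h a
  have hperm := List.mergeSort_perm univ.toList fun a b => decide (depth a ≤ depth b)
  refine ⟨_, hperm.nodup_iff.mpr (nodup_toList _), fun a => hperm.mem_iff.mpr (mem_toList.mpr
    (mem_univ a)), (List.pairwise_mergeSort ?_ ?_ _).imp fun hab hba => ?_⟩
  · simp only [decide_eq_true_eq]
    exact fun _ _ _ => le_trans
  · simp only [Bool.or_eq_true, decide_eq_true_eq]
    exact fun a b => le_total _ _
  · exact absurd (decide_eq_true_eq.mp hab) (not_le.mpr (hdepth _ _ hba))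

end TopologicalOrder

section HM

variable {n k : ℕ} {ι : Type} {P : Fin n → LinearOrder ι} {M : ι → Fin n}

theorem HM_irrefl (p : Fin n → ℕ → ι) (a : Fin n) : ¬ HM P k p a a := by
  rintro ⟨i, -, -, h⟩
  let := P a
  exact h.false

theorem forall_pairwise_round_iff {q : Fin n → ℕ → ι} {σ : List (Fin n)} (hσ : σ.Nodup)
    (hq : ∀ j i, 1 ≤ i → i ≤ k → M (q j i) = j) :
    (∀ i, 1 ≤ i → i ≤ k → σ.Pairwise fun a b => (P a).lt (q b i) (q a i)) ↔
      σ.Pairwise fun a b => ¬ HM P k q b a := by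
  simp only [List.pairwise_iff_getElem]
  constructor
  · rintro h x y hx hy hxy ⟨i, h1, h2, hlt⟩
    let := P σ[x]
    exact (h i h1 h2 x y hx hy hxy).asymm hlt
  · intro h i h1 h2 x y hx hy hxy
    have hne : q σ[y] i ≠ q σ[x] i := fun he => by
      have hyx : σ[y] = σ[x] := by rw [← hq σ[y] i h1 h2, he, hq σ[x] i h1 h2]
      exact hxy.ne' (hσ.getElem_inj_iff.mp hyx)
    let := P σ[x]
    exact lt_of_le_of_ne (not_lt.mp fun hlt => h x y hx hy hxy ⟨i, h1, h2, hlt⟩) hne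

end HM

section Characterization

variable {n k : ℕ} {ι : Type} {P : Fin n → LinearOrder ι} {M : ι → Fin n}

theorem bundle_iff_of_isGreedy_roundPicks {σ : List (Fin n)} {q : Fin n → ℕ → ι}
    (hmem : ∀ a, a ∈ σ) (hgreedy : IsGreedy P (roundPicks σ k q))
    (hcov : ∀ o, (M o, o) ∈ roundPicks σ k q) (j : Fin n) (o : ι) :
    M o = j ↔ ∃ i, (1 ≤ i ∧ i ≤ k) ∧ q j i = o := by
  constructor
  · rintro rfl
    obtain ⟨i, hi, j, -, hj⟩ := mem_roundPicks.mp (hcov o)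
    simp only [Prod.mk.injEq] at hj
    obtain ⟨rfl, hjo⟩ := hj
    exact ⟨i, hi, hjo⟩
  · rintro ⟨i, hi, rfl⟩
    exact (hgreedy.fst_eq hcov (mem_roundPicks.mpr ⟨i, hi, j, hmem j, rfl⟩)).symm

theorem conditions_of_isGreedy_roundPicks [Fintype ι] {σ : List (Fin n)} {q : Fin n → ℕ → ι}
    (hnd : σ.Nodup) (hmem : ∀ a, a ∈ σ) (hgreedy : IsGreedy P (roundPicks σ k q))
    (hcov : ∀ o, (M o, o) ∈ roundPicks σ k q) :
    ParetoOptimal P M ∧ BalancedAlloc k M ∧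
      ∀ p, IsRankingOf P k M p → Cond3 P k p ∧ ∀ a, ¬ TransGen (HM P k p) a a := by
  obtain ⟨hround, hq3⟩ := (isGreedy_roundPicks_iff hmem).mp hgreedy
  have hanti : ∀ j t s, 1 ≤ t → t < s → s ≤ k → (P j).lt (q j s) (q j t) :=
    fun j t s h1 h2 h3 => hq3 t s h1 h2 h3 j j
  have hbundle := bundle_iff_of_isGreedy_roundPicks hmem hgreedy hcov
  have hq := isRankingOf_of_strictAnti hanti hbundle
  have hσ := (forall_pairwise_round_iff hnd fun j i h1 h2 => (hq j i h1 h2).1).mp hround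
  refine ⟨hgreedy.paretoOptimal hcov, balancedAlloc_of_strictAnti hanti hbundle, fun p hp => ?_⟩
  have hpq : ∀ j i, 1 ≤ i → i ≤ k → p j i = q j i := fun j i h1 h2 => hp.eq hq h1 h2
  refine ⟨fun t s h1 h2 h3 j j' => ?_, fun a hcyc => ?_⟩
  · rw [hpq j t h1 (by omega), hpq j' s (by omega) h3]
    exact hq3 t s h1 h2 h3 j j'
  · refine Relation.not_transGen_self_of_pairwise hmem (HM_irrefl q) hσ a
      (TransGen.mono ?_ a a hcyc)
    rintro b c ⟨i, h1, h2, hlt⟩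
    exact ⟨i, h1, h2, by rwa [← hpq b i h1 h2, ← hpq c i h1 h2]⟩

theorem exists_isGreedy_roundPicks_of_conditions [Fintype ι] [Inhabited ι]
    (hbal : BalancedAlloc k M)
    (h : ∀ p, IsRankingOf P k M p → Cond3 P k p ∧ ∀ a, ¬ TransGen (HM P k p) a a) :
    ∃ σ q, σ.Nodup ∧ (∀ a, a ∈ σ) ∧ IsGreedy P (roundPicks σ k q) ∧
      ∀ o, (M o, o) ∈ roundPicks σ k q := by
  choose q hanti hbundle using fun j => exists_strictAnti_enum (P j) _ (hbal j)
  replace hbundle : ∀ j o, M o = j ↔ ∃ i, (1 ≤ i ∧ i ≤ k) ∧ q j i = o := fun j o => by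
    simpa using hbundle j o
  have hq := isRankingOf_of_strictAnti hanti hbundle
  obtain ⟨hq3, hacyc⟩ := h q hq
  obtain ⟨σ, hnd, hmem, hσ⟩ := Relation.exists_pairwise_of_acyclic hacyc
  have hround := (forall_pairwise_round_iff hnd fun j i h1 h2 => (hq j i h1 h2).1).mpr hσ
  refine ⟨σ, q, hnd, hmem, (isGreedy_roundPicks_iff hmem).mpr ⟨hround, hq3⟩, fun o => ?_⟩
  obtain ⟨i, hi, hio⟩ := (hbundle (M o) o).mp rfl
  exact mem_roundPicks.mpr ⟨i, hi, M o, hmem _, by rw [hio]⟩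

end Characterization

/-- An allocation `M` is the outcome of some strict alternation policy if
and only if `M` is Pareto optimal, balanced, satisfies Condition 3, and the directed
graph `H_M` contains no cycle. -/
theorem possible_assignment_strict_alternation
    {ι : Type} [Fintype ι] [DecidableEq ι] {n k : ℕ} (hn : 0 < n) (hk : 1 ≤ k)
    (hcard : Fintype.card ι = k * n)
    (P : Fin n → LinearOrder ι) (M : ι → Fin n) :
    (∃ π : List (Fin n), StrictAlt n k π ∧ IsOutcome P π M) ↔
      ParetoOptimal P M ∧ BalancedAlloc k M ∧
        ∀ p : Fin n → ℕ → ι, IsRankingOf P k M p →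
          Cond3 P k p ∧ ∀ a : Fin n, ¬ Relation.TransGen (HM P k p) a a := by
  have : Nonempty ι := Fintype.card_pos_iff.mp (hcard ▸ Nat.mul_pos hk hn)
  inhabit ι
  rw [strictAlt_outcome_iff hcard]
  constructor
  · rintro ⟨σ, q, hnd, hmem, hgreedy, hcov⟩
    exact conditions_of_isGreedy_roundPicks hnd hmem hgreedy hcov
  · rintro ⟨-, hbal, h⟩
    exact exists_isGreedy_roundPicks_of_conditions hbal h
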